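/- arXiv:1908.08465 — 8 statements merged into one kernel-verified Lean document; each statement's English description precedes it below -/
import Mathlib

section
/- Let x, y₁, y₂ ∈ ℝ^d and let C₂ ⊆ C₁ ⊆ ℝ^d be nonempty closed convex sets. Set x₁ = proj_{C₁}(x - y₁) and x₂ = proj_{C₂}(x - y₂). Then for all p ∈ C₂: ‖x₂ - p‖² ≤ ‖x - p‖² - 2⟨y₂, x₁ - p⟩ + 2⟨y₂ - y₁, x₁ - x₂⟩ - ‖x₂ - x₁‖² - ‖x₁ - x‖², and consequently also ‖x₂ - p‖² ≤ ‖x - p‖² - 2⟨y₂, x₁ - p⟩ + ‖y₂ - y₁‖² - ‖x₁ - x‖². -/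
open scoped RealInnerProductSpace

/-- `p` is the Euclidean (metric) projection of `z` onto `C`. -/
def IsProjOn {d : ℕ} (C : Set (EuclideanSpace ℝ (Fin d)))
    (z p : EuclideanSpace ℝ (Fin d)) : Prop :=
  p ∈ C ∧ ∀ q ∈ C, ‖z - p‖ ≤ ‖z - q‖

set_option maxHeartbeats 800000 in
lemma isProjOn_vi {d : ℕ} {C : Set (EuclideanSpace ℝ (Fin d))}
    (hcv : Convex ℝ C) {z p : EuclideanSpace ℝ (Fin d)}
    (h : IsProjOn C z p) : ∀ q ∈ C, ⟪z - p, q - p⟫ ≤ 0 := by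
  have hp := h.1
  haveI : Nonempty C := ⟨⟨p, hp⟩⟩
  have hinf : ‖z - p‖ = ⨅ w : C, ‖z - w‖ := by
    apply le_antisymm
    · exact le_ciInf fun w => h.2 w w.2
    · exact ciInf_le ⟨0, fun _ ⟨_, hh⟩ => hh ▸ norm_nonneg _⟩ (⟨p, hp⟩ : C)
  exact (norm_eq_iInf_iff_real_inner_le_zero hcv hp).mp hinf

/-- Four-point inequalities for two projections onto nested convex sets. -/
theorem four_point_inequality {d : ℕ}
    (C₁ C₂ : Set (EuclideanSpace ℝ (Fin d)))
    (hne₁ : C₁.Nonempty) (hcl₁ : IsClosed C₁) (hcv₁ : Convex ℝ C₁)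
    (hne₂ : C₂.Nonempty) (hcl₂ : IsClosed C₂) (hcv₂ : Convex ℝ C₂)
    (hsub : C₂ ⊆ C₁)
    (x y₁ y₂ x₁ x₂ : EuclideanSpace ℝ (Fin d))
    (hproj₁ : IsProjOn C₁ (x - y₁) x₁)
    (hproj₂ : IsProjOn C₂ (x - y₂) x₂) :
    ∀ p ∈ C₂,
      (‖x₂ - p‖ ^ 2 ≤
        ‖x - p‖ ^ 2 - 2 * ⟪y₂, x₁ - p⟫ + 2 * ⟪y₂ - y₁, x₁ - x₂⟫
          - ‖x₂ - x₁‖ ^ 2 - ‖x₁ - x‖ ^ 2) ∧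
      (‖x₂ - p‖ ^ 2 ≤
        ‖x - p‖ ^ 2 - 2 * ⟪y₂, x₁ - p⟫ + ‖y₂ - y₁‖ ^ 2 - ‖x₁ - x‖ ^ 2) := by
  intro p hp
  have A : ⟪x - y₁ - x₁, x₂ - x₁⟫ ≤ 0 :=
    isProjOn_vi hcv₁ hproj₁ x₂ (hsub hproj₂.1)
  have B : ⟪x - y₂ - x₂, p - x₂⟫ ≤ 0 :=
    isProjOn_vi hcv₂ hproj₂ p hp
  have key : ‖x₂ - p‖ ^ 2 -
      (‖x - p‖ ^ 2 - 2 * ⟪y₂, x₁ - p⟫ + 2 * ⟪y₂ - y₁, x₁ - x₂⟫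
        - ‖x₂ - x₁‖ ^ 2 - ‖x₁ - x‖ ^ 2)
      = 2 * ⟪x - y₂ - x₂, p - x₂⟫ + 2 * ⟪x - y₁ - x₁, x₂ - x₁⟫ := by
    simp only [← real_inner_self_eq_norm_sq, inner_sub_left, inner_sub_right]
    have h1 := real_inner_comm x p
    have h2 := real_inner_comm x y₁
    have h3 := real_inner_comm x y₂
    have h4 := real_inner_comm x x₁
    have h5 := real_inner_comm x x₂
    have h6 := real_inner_comm p y₁
    have h7 := real_inner_comm p y₂
    have h8 := real_inner_comm p x₁
    have h9 := real_inner_comm p x₂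
    have h10 := real_inner_comm y₁ y₂
    have h11 := real_inner_comm y₁ x₁
    have h12 := real_inner_comm y₁ x₂
    have h13 := real_inner_comm y₂ x₁
    have h14 := real_inner_comm y₂ x₂
    have h15 := real_inner_comm x₁ x₂
    linarith
  have first : ‖x₂ - p‖ ^ 2 ≤
      ‖x - p‖ ^ 2 - 2 * ⟪y₂, x₁ - p⟫ + 2 * ⟪y₂ - y₁, x₁ - x₂⟫
        - ‖x₂ - x₁‖ ^ 2 - ‖x₁ - x‖ ^ 2 := by linarith
  refine ⟨first, ?_⟩
  have young := norm_sub_sq_real (y₂ - y₁) (x₁ - x₂)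
  have hnn := sq_nonneg ‖y₂ - y₁ - (x₁ - x₂)‖
  have hrev2 : ‖x₂ - x₁‖ ^ 2 = ‖x₁ - x₂‖ ^ 2 := by rw [norm_sub_rev]
  linarith
end

section
/- Let (a_n) be a sequence of real numbers, let m be a natural number, q > 1, c > 0, and n₀ ∈ ℕ. Suppose that for all n ≥ n₀, a_{n+1} ≤ (1 - q/(n+m)) a_n + c/(n+m)². Then a_n ≤ (c/(q-1)) · (1/n) + o(1/n); in particular, limsup_{n→∞} n·a_n ≤ c/(q-1). -/
/-!
With `t n = n + m` and `K = c / (q - 1)`, the recursion turns, once `t n > q`, into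
`w (n + 1) ≤ ρ n * w n` for `w n = t n * a n - K`, where `0 ≤ ρ n ≤ 1 - (q - 1) / t n`.
Hence the positive part of `w` is dominated by `exp (-(q - 1) ∑ 1 / t i)`, which tends to `0`
because the harmonic series diverges. Finally `n * a n ≤ K + (w n)⁺`.
-/

open Filter Asymptotics Finset Topology

lemma le_exp_neg_sum_mul_of_le_one_sub_mul {v b : ℕ → ℝ} (hv : ∀ n, 0 ≤ v n)
    (hrec : ∀ n, v (n + 1) ≤ (1 - b n) * v n) (n : ℕ) :
    v n ≤ Real.exp (-∑ i ∈ range n, b i) * v 0 := by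
  induction n with
  | zero => simp
  | succ n ih =>
    calc v (n + 1) ≤ (1 - b n) * v n := hrec n
      _ ≤ Real.exp (-b n) * v n := by
        gcongr
        · exact hv n
        · linarith [Real.add_one_le_exp (-b n)]
      _ ≤ Real.exp (-b n) * (Real.exp (-∑ i ∈ range n, b i) * v 0) := by gcongr
      _ = Real.exp (-∑ i ∈ range (n + 1), b i) * v 0 := by
        rw [sum_range_succ, ← mul_assoc, ← Real.exp_add]; ring_nf

lemma tendsto_zero_of_le_one_sub_mul {v b : ℕ → ℝ} (hv : ∀ n, 0 ≤ v n)
    (hrec : ∀ n, v (n + 1) ≤ (1 - b n) * v n)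
    (hb : Tendsto (fun n => ∑ i ∈ range n, b i) atTop atTop) :
    Tendsto v atTop (𝓝 0) := by
  have hexp : Tendsto (fun n => Real.exp (-∑ i ∈ range n, b i) * v 0) atTop (𝓝 0) := by
    simpa using (Real.tendsto_exp_neg_atTop_nhds_zero.comp hb).mul_const (v 0)
  exact tendsto_of_tendsto_of_tendsto_of_le_of_le tendsto_const_nhds hexp hv
    (le_exp_neg_sum_mul_of_le_one_sub_mul hv hrec)

lemma tendsto_sum_range_one_div_add_atTop (M : ℕ) :
    Tendsto (fun n => ∑ i ∈ range n, 1 / ((i : ℝ) + M)) atTop atTop := by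
  rw [← not_summable_iff_tendsto_nat_atTop_of_nonneg fun i => by positivity]
  intro h
  refine Real.not_summable_one_div_natCast ((summable_nat_add_iff M).mp ?_)
  simpa using h

lemma posPart_le_mul_posPart {x y ρ σ : ℝ} (h : y ≤ ρ * x) (hρ : 0 ≤ ρ)
    (hρσ : ρ ≤ σ) : y⁺ ≤ σ * x⁺ := by
  have hσx : ρ * x ≤ σ * x⁺ := by
    calc ρ * x ≤ ρ * x⁺ := by gcongr; exact le_posPart x
      _ ≤ σ * x⁺ := by gcongr
  rw [posPart_def]
  exact sup_le (h.trans hσx) (mul_nonneg (hρ.trans hρσ) (posPart_nonneg x))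

lemma mul_le_add_posPart {s t x K : ℝ} (hs : 0 ≤ s) (hst : s ≤ t) (hK : 0 ≤ K) :
    s * x ≤ K + (t * x - K)⁺ := by
  rcases le_or_gt 0 x with hx | hx
  · linarith [le_posPart (t * x - K), mul_le_mul_of_nonneg_right hst hx]
  · linarith [posPart_nonneg (t * x - K), mul_nonpos_of_nonneg_of_nonpos hs hx.le]

lemma Real.limsup_le_of_le_add_of_tendsto_zero {α : Type*} {l : Filter α} {f v : α → ℝ}
    {K : ℝ} (hK : 0 ≤ K) (hf : ∀ᶠ x in l, f x ≤ K + v x) (hv : Tendsto v l (𝓝 0)) :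
    limsup f l ≤ K := by
  by_cases hcob : l.IsCoboundedUnder (· ≤ ·) f
  · refine le_of_forall_pos_le_add fun ε hε => limsup_le_of_le hcob ?_
    filter_upwards [hf, hv.eventually (ge_mem_nhds hε)] with x hfx hvx
    linarith
  · rwa [Real.limsup_of_not_isCoboundedUnder hcob]

lemma posPart_chung_step {q c t x y : ℝ} (hq : 1 < q) (hc : 0 ≤ c) (ht : q < t)
    (h : y ≤ (1 - q / t) * x + c / t ^ 2) :
    ((t + 1) * y - c / (q - 1))⁺ ≤ (1 - (q - 1) / t) * (t * x - c / (q - 1))⁺ := by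
  have ht0 : 0 < t := by linarith
  have hq1 : 0 < q - 1 := by linarith
  set K := c / (q - 1) with hK
  have hcK : c = K * (q - 1) := by rw [hK, div_mul_cancel₀ c hq1.ne']
  set ρ := (t + 1) * (t - q) / t ^ 2 with hρ
  have hρ0 : 0 ≤ ρ := div_nonneg (mul_nonneg (by linarith) (by linarith)) (by positivity)
  have hσ : 1 - (q - 1) / t = ρ + q / t ^ 2 := by rw [hρ]; field_simp; ring
  have hρle : ρ ≤ 1 - (q - 1) / t := by
    rw [hσ]; linarith [div_nonneg (by linarith : 0 ≤ q) (sq_nonneg t)]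
  refine posPart_le_mul_posPart ?_ hρ0 hρle
  calc (t + 1) * y - K ≤ (t + 1) * ((1 - q / t) * x + c / t ^ 2) - K := by gcongr
    _ = ρ * (t * x - K) - K / t ^ 2 := by rw [hρ, hcK]; field_simp; ring
    _ ≤ ρ * (t * x - K) := by linarith [div_nonneg (div_nonneg hc hq1.le) (sq_nonneg t)]

lemma tendsto_posPart_of_chung_recursion {a : ℕ → ℝ} {m : ℕ} {q c : ℝ} {n₀ : ℕ}
    (hq : 1 < q) (hc : 0 ≤ c)
    (hrec : ∀ n : ℕ, n₀ ≤ n →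
      a (n + 1) ≤ (1 - q / ((n : ℝ) + m)) * a n + c / ((n : ℝ) + m) ^ 2) :
    Tendsto (fun n : ℕ => (((n : ℝ) + m) * a n - c / (q - 1))⁺) atTop (𝓝 0) := by
  obtain ⟨N, hN⟩ := exists_nat_gt (max q n₀)
  have hqN : q < N := (le_max_left _ _).trans_lt hN
  have hn₀N : n₀ ≤ N := by exact_mod_cast (le_max_right _ _).trans hN.le
  rw [← tendsto_add_atTop_iff_nat N]
  refine tendsto_zero_of_le_one_sub_mul (b := fun j => (q - 1) / (((j + N : ℕ) : ℝ) + m))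
    (fun _ => posPart_nonneg _) (fun j => ?_) ?_
  · have ht : q < ((j + N : ℕ) : ℝ) + m := by
      push_cast; linarith [j.cast_nonneg (α := ℝ), m.cast_nonneg (α := ℝ)]
    convert posPart_chung_step hq hc ht (hrec (j + N) (by omega)) using 3
    rw [show j + 1 + N = j + N + 1 by omega]
    push_cast; ring
  · have hdiv := (tendsto_sum_range_one_div_add_atTop (N + m)).const_mul_atTop
      (by linarith : 0 < q - 1)
    refine hdiv.congr fun n => ?_
    rw [mul_sum]
    refine sum_congr rfl fun i _ => ?_
    push_cast; ring

/-- Chung's lemma. -/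
theorem chung_lemma (a : ℕ → ℝ) (m : ℕ) (q c : ℝ) (n₀ : ℕ)
    (hq : 1 < q) (hc : 0 < c)
    (hrec : ∀ n : ℕ, n₀ ≤ n →
      a (n + 1) ≤ (1 - q / ((n : ℝ) + m)) * a n + c / ((n : ℝ) + m) ^ 2) :
    (∃ e : ℕ → ℝ,
        (fun n => e n) =o[atTop] (fun n => 1 / (n : ℝ)) ∧
        ∀ᶠ n in atTop, a n ≤ c / (q - 1) * (1 / (n : ℝ)) + e n) ∧
      limsup (fun n : ℕ => (n : ℝ) * a n) atTop ≤ c / (q - 1) := by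
  have hK : 0 ≤ c / (q - 1) := div_nonneg hc.le (by linarith)
  set v : ℕ → ℝ := fun n => (((n : ℝ) + m) * a n - c / (q - 1))⁺
  have hv : Tendsto v atTop (𝓝 0) := tendsto_posPart_of_chung_recursion hq hc.le hrec
  have hbound : ∀ n : ℕ, (n : ℝ) * a n ≤ c / (q - 1) + v n := fun n =>
    mul_le_add_posPart n.cast_nonneg (by simp) hK
  refine ⟨⟨fun n => v n * (1 / n), ?_, ?_⟩,
    Real.limsup_le_of_le_add_of_tendsto_zero hK (.of_forall hbound) hv⟩
  · simpa using ((isLittleO_one_iff ℝ).mpr hv).mul_isBigO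
      (isBigO_refl (fun n : ℕ => 1 / (n : ℝ)) atTop)
  · filter_upwards [eventually_gt_atTop 0] with n hn
    have hn' : (0 : ℝ) < n := by exact_mod_cast hn
    calc a n = n * a n * (1 / n) := by field_simp
      _ ≤ (c / (q - 1) + v n) * (1 / n) := by gcongr; exact hbound n
      _ = c / (q - 1) * (1 / n) + v n * (1 / n) := by ring
end

section
/- Let V : ℝ^d → ℝ^d be a monotone operator, X ⊆ ℝ^d nonempty closed convex, R > 0, and X_R = X ∩ {x : ‖x - x₁‖ ≤ R} for a base point x₁ ∈ X. Suppose (x_j)_{j ∈ ℕ/2} is a sequence of points with x_{j+1/2} ∈ X and there are nonnegative reals λ_j, M_j such that for every p ∈ X_R and every integer j with 1 ≤ j ≤ t: ‖x_{j+1} - p‖² ≤ ‖x_j - p‖² - 2λ_j ⟨V(x_{j+1/2}), x_{j+1/2} - p⟩ + M_j - M_{j+1}. Then the weighted average x̄ = (Σ_{j=1}^t λ_j x_{j+1/2}) / (Σ_{j=1}^t λ_j) satisfies Err_R(x̄) ≤ (R² + M₁)/(2 Σ_{j=1}^t λ_j), where Err_R(x̂) = max_{x ∈ X_R} ⟨V(x),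 x̂ - x⟩. -/
open scoped RealInnerProductSpace

/-- Template lemma: from a quasi-descent inequality to a bound on the restricted
merit function of the weighted ergodic average. -/
theorem ergodic_template {d : ℕ}
    (V : EuclideanSpace ℝ (Fin d) → EuclideanSpace ℝ (Fin d))
    (hmono : ∀ x y : EuclideanSpace ℝ (Fin d), 0 ≤ ⟪V y - V x, y - x⟫)
    (X : Set (EuclideanSpace ℝ (Fin d)))
    (hne : X.Nonempty) (hcl : IsClosed X) (hcv : Convex ℝ X)
    (R : ℝ) (hR : 0 < R)
    (x xh : ℕ → EuclideanSpace ℝ (Fin d))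
    (hx1 : x 1 ∈ X) (hxh : ∀ j, xh j ∈ X)
    (lam M : ℕ → ℝ) (hlam : ∀ j, 0 ≤ lam j) (hM : ∀ j, 0 ≤ M j)
    (t : ℕ) (ht : 1 ≤ t)
    (hsum : 0 < ∑ j ∈ Finset.Icc 1 t, lam j)
    (hdesc : ∀ p ∈ X ∩ Metric.closedBall (x 1) R, ∀ j ∈ Finset.Icc 1 t,
      ‖x (j + 1) - p‖ ^ 2 ≤
        ‖x j - p‖ ^ 2 - 2 * lam j * ⟪V (xh j), xh j - p⟫ + M j - M (j + 1)) :
    ∀ p ∈ X ∩ Metric.closedBall (x 1) R,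
      ⟪V p, ((∑ j ∈ Finset.Icc 1 t, lam j)⁻¹ • ∑ j ∈ Finset.Icc 1 t, lam j • xh j) - p⟫ ≤
        (R ^ 2 + M 1) / (2 * ∑ j ∈ Finset.Icc 1 t, lam j) := by
  intro p hp
  set S := ∑ j ∈ Finset.Icc 1 t, lam j with hS
  have hSne : S ≠ 0 := ne_of_gt hsum
  -- pointwise bound with telescoping right-hand side
  have hkey : ∀ j ∈ Finset.Icc 1 t,
      2 * (lam j * ⟪V p, xh j - p⟫) ≤
        (‖x j - p‖ ^ 2 + M j) - (‖x (j + 1) - p‖ ^ 2 + M (j + 1)) := by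
    intro j hj
    have h1 := hdesc p hp j hj
    have h2 : ⟪V p, xh j - p⟫ ≤ ⟪V (xh j), xh j - p⟫ := by
      have h := hmono p (xh j)
      rw [inner_sub_left] at h
      linarith
    nlinarith [hlam j]
  have htel : ∑ j ∈ Finset.Icc 1 t, 2 * (lam j * ⟪V p, xh j - p⟫) ≤
      (‖x 1 - p‖ ^ 2 + M 1) - (‖x (t + 1) - p‖ ^ 2 + M (t + 1)) := by
    calc ∑ j ∈ Finset.Icc 1 t, 2 * (lam j * ⟪V p, xh j - p⟫)
        ≤ ∑ j ∈ Finset.Icc 1 t,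
            ((‖x j - p‖ ^ 2 + M j) - (‖x (j + 1) - p‖ ^ 2 + M (j + 1))) :=
          Finset.sum_le_sum hkey
      _ = _ := by
          rw [← Finset.Ico_add_one_right_eq_Icc, Finset.sum_Ico_eq_sum_range]
          have := Finset.sum_range_sub' (fun i => ‖x (i + 1) - p‖ ^ 2 + M (i + 1)) t
          simpa [add_comm, add_assoc, add_left_comm] using this
  have hball : ‖x 1 - p‖ ≤ R := by
    have := hp.2
    rw [Metric.mem_closedBall, dist_comm, dist_eq_norm] at this
    exact this
  have hbound : 2 * ∑ j ∈ Finset.Icc 1 t, lam j * ⟪V p, xh j - p⟫ ≤ R ^ 2 + M 1 := by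
    rw [← Finset.mul_sum] at htel
    have h1 : ‖x 1 - p‖ ^ 2 ≤ R ^ 2 := by
      have := norm_nonneg (x 1 - p)
      nlinarith
    have h2 := hM (t + 1)
    nlinarith [sq_nonneg ‖x (t + 1) - p‖]
  -- rewrite the inner product of the average
  have havg : ⟪V p, (S⁻¹ • ∑ j ∈ Finset.Icc 1 t, lam j • xh j) - p⟫
      = S⁻¹ * ∑ j ∈ Finset.Icc 1 t, lam j * ⟪V p, xh j - p⟫ := by
    have hrw : (S⁻¹ • ∑ j ∈ Finset.Icc 1 t, lam j • xh j) - p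
        = S⁻¹ • ∑ j ∈ Finset.Icc 1 t, lam j • (xh j - p) := by
      have : ∑ j ∈ Finset.Icc 1 t, lam j • (xh j - p)
          = (∑ j ∈ Finset.Icc 1 t, lam j • xh j) - S • p := by
        rw [hS, Finset.sum_smul, ← Finset.sum_sub_distrib]
        simp [smul_sub]
      rw [this, smul_sub, smul_smul, inv_mul_cancel₀ hSne, one_smul]
    rw [hrw, real_inner_smul_right, inner_sum]
    congr 1
    exact Finset.sum_congr rfl fun j _ => real_inner_smul_right _ _ _
  rw [havg]
  rw [div_eq_mul_inv, mul_inv, ← mul_assoc]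
  have h2S : (0:ℝ) < 2 * S := by linarith
  have : S⁻¹ * ∑ j ∈ Finset.Icc 1 t, lam j * ⟪V p, xh j - p⟫
      = (2 * ∑ j ∈ Finset.Icc 1 t, lam j * ⟪V p, xh j - p⟫) * (2 * S)⁻¹ := by
    field_simp
  rw [this, mul_inv, ← mul_assoc] at *
  have h2inv : (0:ℝ) ≤ 2⁻¹ * S⁻¹ := by positivity
  calc (2 * ∑ j ∈ Finset.Icc 1 t, lam j * ⟪V p, xh j - p⟫) * 2⁻¹ * S⁻¹
      ≤ (R ^ 2 + M 1) * 2⁻¹ * S⁻¹ := by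
        have := mul_le_mul_of_nonneg_right hbound h2inv
        calc _ = (2 * ∑ j ∈ Finset.Icc 1 t, lam j * ⟪V p, xh j - p⟫) * (2⁻¹ * S⁻¹) := by ring
          _ ≤ (R ^ 2 + M 1) * (2⁻¹ * S⁻¹) := this
          _ = _ := by ring
end

section
/- Let f : ℝ^d → ℝ be convex and differentiable, X ⊆ ℝ^d nonempty closed convex containing a minimizer of f. Suppose points x_{j+1/2} ∈ X, weights λ_j > 0, and nonnegative reals M_j satisfy, for every p ∈ X and 1 ≤ j ≤ t: ‖x_{j+1} - p‖² ≤ ‖x_j - p‖² - 2λ_j ⟨∇f(x_{j+1/2}), x_{j+1/2} - p⟩ + M_j - M_{j+1}. Then with x̄ = (Σ_j λ_j x_{j+1/2})/(Σ_j λ_j) and R = dist(x₁, argmin_X f), one has f(x̄) - min_X f ≤ (R² + M₁)/(2 Σ_{j=1}^t λ_j). -/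
open scoped RealInnerProductSpace

lemma grad_ineq {d : ℕ} {f : EuclideanSpace ℝ (Fin d) → ℝ}
    (hconv : ConvexOn ℝ Set.univ f) {y gy : EuclideanSpace ℝ (Fin d)}
    (hg : HasGradientAt f gy y) (p : EuclideanSpace ℝ (Fin d)) :
    f y + ⟪gy, p - y⟫ ≤ f p := by
  have hφ : ConvexOn ℝ Set.univ (f ∘ (AffineMap.lineMap y p : ℝ →ᵃ[ℝ] _)) := by
    have := hconv.comp_affineMap (AffineMap.lineMap y p : ℝ →ᵃ[ℝ] _)
    simpa using this
  have hc : HasDerivAt (fun s : ℝ => (AffineMap.lineMap y p : ℝ →ᵃ[ℝ] _) s) (p - y) 0 := by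
    have : HasDerivAt (fun s : ℝ => s • (p - y) + y) ((1:ℝ) • (p - y)) 0 :=
      ((hasDerivAt_id (0:ℝ)).smul_const (p - y)).add_const y
    simpa [AffineMap.lineMap_apply_module'] using this
  have hd : HasDerivAt (f ∘ (AffineMap.lineMap y p : ℝ →ᵃ[ℝ] _)) ⟪gy, p - y⟫ 0 := by
    have h0 : (AffineMap.lineMap y p : ℝ →ᵃ[ℝ] _) (0:ℝ) = y := by
      simp [AffineMap.lineMap_apply_module']
    have := (h0 ▸ hg.hasFDerivAt).comp_hasDerivAt 0 hc
    simpa [InnerProductSpace.toDual_apply_apply] using this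
  have := hφ.le_slope_of_hasDerivAt (Set.mem_univ (0:ℝ)) (Set.mem_univ (1:ℝ)) one_pos hd
  rw [slope_def_field] at this
  simp only [AffineMap.lineMap_apply_module', one_smul, zero_smul, zero_add, div_one, sub_zero,
    Function.comp_apply, sub_add_cancel] at this
  linarith

/-- Template lemma in the loss-minimization case: from a quasi-descent inequality to a
bound on the optimality gap of the weighted ergodic average. -/
theorem ergodic_template_minimization {d : ℕ}
    (f : EuclideanSpace ℝ (Fin d) → ℝ)
    (hconv : ConvexOn ℝ Set.univ f)
    (g : EuclideanSpace ℝ (Fin d) → EuclideanSpace ℝ (Fin d))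
    (hg : ∀ y, HasGradientAt f (g y) y)
    (X : Set (EuclideanSpace ℝ (Fin d)))
    (hne : X.Nonempty) (hcl : IsClosed X) (hcv : Convex ℝ X)
    (hmin : ∃ z ∈ X, IsMinOn f X z)
    (x xh : ℕ → EuclideanSpace ℝ (Fin d))
    (hx1 : x 1 ∈ X) (hxh : ∀ j, xh j ∈ X)
    (lam M : ℕ → ℝ) (hlam : ∀ j, 0 < lam j) (hM : ∀ j, 0 ≤ M j)
    (t : ℕ) (ht : 1 ≤ t)
    (hdesc : ∀ p ∈ X, ∀ j ∈ Finset.Icc 1 t,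
      ‖x (j + 1) - p‖ ^ 2 ≤
        ‖x j - p‖ ^ 2 - 2 * lam j * ⟪g (xh j), xh j - p⟫ + M j - M (j + 1)) :
    ∀ z ∈ X, IsMinOn f X z →
      f ((∑ j ∈ Finset.Icc 1 t, lam j)⁻¹ • ∑ j ∈ Finset.Icc 1 t, lam j • xh j) - f z ≤
        ((Metric.infDist (x 1) {z ∈ X | IsMinOn f X z}) ^ 2 + M 1) /
          (2 * ∑ j ∈ Finset.Icc 1 t, lam j) := by
  intro z hz hzmin
  set S : Set (EuclideanSpace ℝ (Fin d)) := {z ∈ X | IsMinOn f X z} with hS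
  -- f is continuous
  have hfc : Continuous f := by
    rw [continuous_iff_continuousAt]
    exact fun y => (hg y).hasFDerivAt.continuousAt
  -- S is closed and nonempty
  have hSeq : S = X ∩ f ⁻¹' Set.Iic (f z) := by
    ext w
    constructor
    · rintro ⟨hwX, hwmin⟩
      exact ⟨hwX, hwmin hz⟩
    · rintro ⟨hwX, hwle⟩
      refine ⟨hwX, fun y hy => ?_⟩
      simp only [Set.mem_setOf_eq]
      exact le_trans hwle (hzmin hy)
  have hScl : IsClosed S := hSeq ▸ hcl.inter (isClosed_Iic.preimage hfc)
  have hSne : S.Nonempty := ⟨z, hz, hzmin⟩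
  obtain ⟨p, hpS, hpd⟩ := hScl.exists_infDist_eq_dist hSne (x 1)
  obtain ⟨hpX, hpmin⟩ := hpS
  have hfpz : f p = f z := le_antisymm (hpmin hz) (hzmin hpX)
  set Λ : ℝ := ∑ j ∈ Finset.Icc 1 t, lam j with hΛ
  have hΛpos : 0 < Λ :=
    Finset.sum_pos (fun j _ => hlam j) (by simp [Finset.Nonempty, ht]; exact ⟨1, le_refl 1, ht⟩)
  -- telescoping
  have tel : ∀ n, n ≤ t → ‖x (n + 1) - p‖ ^ 2 + M (n + 1) ≤
      ‖x 1 - p‖ ^ 2 + M 1 - 2 * ∑ j ∈ Finset.Icc 1 n, lam j * ⟪g (xh j), xh j - p⟫ := by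
    intro n
    induction n with
    | zero => intro _; simp
    | succ m ih =>
      intro hmt
      have h1 := ih (le_trans (Nat.le_succ m) hmt)
      have h2 := hdesc p hpX (m + 1) (Finset.mem_Icc.mpr ⟨Nat.succ_le_succ (Nat.zero_le m), hmt⟩)
      rw [Finset.sum_Icc_succ_top (Nat.succ_le_succ (Nat.zero_le m))]
      linarith
  have tel' := tel t le_rfl
  have hx2 : (0:ℝ) ≤ ‖x (t + 1) - p‖ ^ 2 := sq_nonneg _
  have key : ∑ j ∈ Finset.Icc 1 t, lam j * ⟪g (xh j), xh j - p⟫ ≤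
      (‖x 1 - p‖ ^ 2 + M 1) / 2 := by
    have := hM (t + 1)
    linarith
  -- convexity: sum bound on function values
  have key2 : ∑ j ∈ Finset.Icc 1 t, lam j * (f (xh j) - f p) ≤
      (‖x 1 - p‖ ^ 2 + M 1) / 2 := by
    refine le_trans (Finset.sum_le_sum fun j _ => ?_) key
    have h5 := grad_ineq hconv (hg (xh j)) p (y := xh j)
    have hin : ⟪g (xh j), p - xh j⟫ = -⟪g (xh j), xh j - p⟫ := by
      rw [← inner_neg_right, neg_sub]
    rw [hin] at h5
    exact mul_le_mul_of_nonneg_left (by linarith) (hlam j).le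
  -- Jensen
  have jensen : f (Λ⁻¹ • ∑ j ∈ Finset.Icc 1 t, lam j • xh j) ≤
      ∑ j ∈ Finset.Icc 1 t, (lam j / Λ) * f (xh j) := by
    have h1 : ∑ j ∈ Finset.Icc 1 t, lam j / Λ = 1 := by
      rw [← Finset.sum_div, div_self hΛpos.ne']
    have := hconv.map_sum_le (t := Finset.Icc 1 t) (w := fun j => lam j / Λ) (p := xh)
      (fun j _ => div_nonneg (hlam j).le hΛpos.le) h1 (fun j _ => Set.mem_univ _)
    have heq : ∑ j ∈ Finset.Icc 1 t, (lam j / Λ) • xh j =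
        Λ⁻¹ • ∑ j ∈ Finset.Icc 1 t, lam j • xh j := by
      rw [Finset.smul_sum]
      exact Finset.sum_congr rfl fun j _ => by
        rw [smul_smul, div_eq_inv_mul]
    rw [heq] at this
    exact this
  have hsum : ∑ j ∈ Finset.Icc 1 t, (lam j / Λ) * f (xh j) - f p =
      Λ⁻¹ * ∑ j ∈ Finset.Icc 1 t, lam j * (f (xh j) - f p) := by
    have h2 : ∑ j ∈ Finset.Icc 1 t, lam j * (f (xh j) - f p) =
        (∑ j ∈ Finset.Icc 1 t, lam j * f (xh j)) - Λ * f p := by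
      simp [mul_sub, Finset.sum_sub_distrib, hΛ, Finset.sum_mul]
    rw [h2, mul_sub, ← mul_assoc, inv_mul_cancel₀ hΛpos.ne', one_mul, Finset.mul_sum]
    congr 1
    exact Finset.sum_congr rfl fun j _ => by rw [div_eq_inv_mul, mul_assoc]
  have final : f (Λ⁻¹ • ∑ j ∈ Finset.Icc 1 t, lam j • xh j) - f p ≤
      (‖x 1 - p‖ ^ 2 + M 1) / (2 * Λ) := by
    have h3 : Λ⁻¹ * ((‖x 1 - p‖ ^ 2 + M 1) / 2) = (‖x 1 - p‖ ^ 2 + M 1) / (2 * Λ) := by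
      rw [inv_mul_eq_div, div_div]
    have h4 : Λ⁻¹ * ∑ j ∈ Finset.Icc 1 t, lam j * (f (xh j) - f p) ≤
        Λ⁻¹ * ((‖x 1 - p‖ ^ 2 + M 1) / 2) :=
      mul_le_mul_of_nonneg_left key2 (inv_nonneg.mpr hΛpos.le)
    linarith [jensen, hsum ▸ h4]
  rw [hpd, dist_eq_norm, ← hfpz]
  calc f (Λ⁻¹ • ∑ j ∈ Finset.Icc 1 t, lam j • xh j) - f p
      ≤ (‖x 1 - p‖ ^ 2 + M 1) / (2 * Λ) := final
    _ = _ := rfl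
end

section
/- Let V : ℝ^d → ℝ^d be monotone and L-Lipschitz continuous, X ⊆ ℝ^d nonempty closed convex. Consider the Past Extra-Gradient iteration with constant step γ ≤ 1/(2L): x_{t+1/2} = proj_X(x_t - γ V(x_{t-1/2})), x_{t+1} = proj_X(x_t - γ V(x_{t+1/2})). Then for every t ≥ 2 and every p ∈ X: ‖x_{t+1} - p‖² ≤ ‖x_t - p‖² - 2γ⟨V(x_{t+1/2}), x_{t+1/2} - p⟩ + γ²L²(‖x_{t-1/2} - x_{t-3/2}‖² - ‖x_{t+1/2} - x_{t-1/2}‖²). -/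
open scoped RealInnerProductSpace

/-- Variational inequality for projections on convex sets. -/
lemma isProjOn_inner_le {d : ℕ} {X : Set (EuclideanSpace ℝ (Fin d))} (hcv : Convex ℝ X)
    {z p : EuclideanSpace ℝ (Fin d)} (hp : IsProjOn X z p) :
    ∀ q ∈ X, ⟪z - p, q - p⟫ ≤ 0 := by
  haveI : Nonempty ↑X := ⟨⟨p, hp.1⟩⟩
  have hinf : ‖z - p‖ = ⨅ w : X, ‖z - w‖ := by
    refine le_antisymm (le_ciInf fun w => hp.2 w w.2) ?_
    exact ciInf_le ⟨0, fun y hy => by obtain ⟨w, rfl⟩ := hy; exact norm_nonneg _⟩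
      (⟨p, hp.1⟩ : X)
  exact (norm_eq_iInf_iff_real_inner_le_zero hcv hp.1).mp hinf

/-- Projections onto convex sets are nonexpansive. -/
lemma isProjOn_nonexpansive {d : ℕ} {X : Set (EuclideanSpace ℝ (Fin d))} (hcv : Convex ℝ X)
    {z1 z2 p1 p2 : EuclideanSpace ℝ (Fin d)}
    (h1 : IsProjOn X z1 p1) (h2 : IsProjOn X z2 p2) : ‖p1 - p2‖ ≤ ‖z1 - z2‖ := by
  have A := isProjOn_inner_le hcv h1 p2 h2.1
  have B := isProjOn_inner_le hcv h2 p1 h1.1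
  have key : ‖p1 - p2‖ ^ 2 ≤ ⟪z1 - z2, p1 - p2⟫ := by
    have e : ⟪z1 - p1, p2 - p1⟫ + ⟪z2 - p2, p1 - p2⟫
        = -⟪z1 - z2, p1 - p2⟫ + ‖p1 - p2‖ ^ 2 := by
      simp only [inner_sub_left, inner_sub_right, ← real_inner_self_eq_norm_sq]
      rw [real_inner_comm p2 p1]
      ring
    linarith [A, B]
  have cs : ⟪z1 - z2, p1 - p2⟫ ≤ ‖z1 - z2‖ * ‖p1 - p2‖ := real_inner_le_norm _ _
  rcases eq_or_lt_of_le (norm_nonneg (p1 - p2)) with h | h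
  · rw [← h]; exact norm_nonneg _
  · nlinarith [key, cs]

set_option maxHeartbeats 1000000 in
/-- Quasi-descent inequality for the Past Extra-Gradient method.
`xh t` stands for the leading state `x_{t+1/2}`. -/
theorem peg_descent {d : ℕ}
    (V : EuclideanSpace ℝ (Fin d) → EuclideanSpace ℝ (Fin d))
    (hmono : ∀ x y : EuclideanSpace ℝ (Fin d), 0 ≤ ⟪V y - V x, y - x⟫)
    (L γ : ℝ) (hL : 0 < L)
    (hlip : ∀ x y : EuclideanSpace ℝ (Fin d), ‖V x - V y‖ ≤ L * ‖x - y‖)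
    (hγ : 0 < γ) (hγle : γ ≤ 1 / (2 * L))
    (X : Set (EuclideanSpace ℝ (Fin d)))
    (hne : X.Nonempty) (hcl : IsClosed X) (hcv : Convex ℝ X)
    (x xh : ℕ → EuclideanSpace ℝ (Fin d))
    (hxh0 : xh 0 ∈ X)
    (hup1 : ∀ t : ℕ, 1 ≤ t → IsProjOn X (x t - γ • V (xh (t - 1))) (xh t))
    (hup2 : ∀ t : ℕ, 1 ≤ t → IsProjOn X (x t - γ • V (xh t)) (x (t + 1))) :
    ∀ t : ℕ, 2 ≤ t → ∀ p ∈ X,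
      ‖x (t + 1) - p‖ ^ 2 ≤
        ‖x t - p‖ ^ 2 - 2 * γ * ⟪V (xh t), xh t - p⟫ +
          γ ^ 2 * L ^ 2 * (‖xh (t - 1) - xh (t - 2)‖ ^ 2 - ‖xh t - xh (t - 1)‖ ^ 2) := by
  intro t ht p hp
  obtain ⟨n, rfl⟩ : ∃ n, t = n + 2 := ⟨t - 2, by omega⟩
  simp only [show n + 2 - 1 = n + 1 by omega, show n + 2 - 2 = n by omega]
  set a := x (n + 2) with ha
  set b := x (n + 2 + 1) with hb
  set h := xh (n + 2) with hh
  set h1 := xh (n + 1) with hh1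
  set h2 := xh n with hh2
  -- projection facts
  have P2 : IsProjOn X (a - γ • V h) b := hup2 (n + 2) (by omega)
  have P1 : IsProjOn X (a - γ • V h1) h := by
    have := hup1 (n + 2) (by omega)
    simpa [show n + 2 - 1 = n + 1 by omega] using this
  have Q1 : IsProjOn X (x (n + 1) - γ • V h2) h1 := by
    have := hup1 (n + 1) (by omega)
    simpa [show n + 1 - 1 = n by omega] using this
  have Q2 : IsProjOn X (x (n + 1) - γ • V h1) a := hup2 (n + 1) (by omega)
  -- F3 : ‖a - h1‖ ≤ γ L ‖h1 - h2‖
  have F3 : ‖a - h1‖ ≤ γ * L * ‖h1 - h2‖ := by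
    have ne := isProjOn_nonexpansive hcv Q2 Q1
    have e : (x (n + 1) - γ • V h1) - (x (n + 1) - γ • V h2) = γ • (V h2 - V h1) := by
      simp [smul_sub]
    rw [e, norm_smul, Real.norm_eq_abs, abs_of_pos hγ] at ne
    have lb : ‖V h2 - V h1‖ ≤ L * ‖h2 - h1‖ := hlip _ _
    rw [norm_sub_rev h2 h1] at lb
    calc ‖a - h1‖ ≤ γ * ‖V h2 - V h1‖ := ne
      _ ≤ γ * (L * ‖h1 - h2‖) := mul_le_mul_of_nonneg_left lb hγ.le
      _ = γ * L * ‖h1 - h2‖ := by ring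
  -- VI1 : γ ⟪V h, b - p⟫ ≤ ⟪a - b, b - p⟫
  have VI1 : γ * ⟪V h, b - p⟫ ≤ ⟪a - b, b - p⟫ := by
    have vi := isProjOn_inner_le hcv P2 p hp
    have e : ⟪a - γ • V h - b, p - b⟫ = γ * ⟪V h, b - p⟫ - ⟪a - b, b - p⟫ := by
      simp only [inner_sub_left, inner_sub_right, real_inner_smul_left]
      ring
    rw [e] at vi; linarith
  -- VI2 : ⟪a - h, b - h⟫ ≤ γ ⟪V h1, b - h⟫
  have VI2 : ⟪a - h, b - h⟫ ≤ γ * ⟪V h1, b - h⟫ := by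
    have vi := isProjOn_inner_le hcv P1 b P2.1
    have e : ⟪a - γ • V h1 - h, b - h⟫ = ⟪a - h, b - h⟫ - γ * ⟪V h1, b - h⟫ := by
      simp only [inner_sub_left, inner_sub_right, real_inner_smul_left]
      ring
    rw [e] at vi; linarith
  -- norm identities
  have idA : ‖a - p‖ ^ 2 = ‖a - b‖ ^ 2 + ‖b - p‖ ^ 2 + 2 * ⟪a - b, b - p⟫ := by
    have := norm_add_sq_real (a - b) (b - p)
    rw [show a - b + (b - p) = a - p by abel] at this
    linarith
  have idN : ‖a - b‖ ^ 2 = ‖a - h‖ ^ 2 + ‖b - h‖ ^ 2 + 2 * ⟪a - h, h - b⟫ := by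
    have := norm_add_sq_real (a - h) (h - b)
    rw [show a - h + (h - b) = a - b by abel] at this
    have e : ‖h - b‖ = ‖b - h‖ := norm_sub_rev _ _
    rw [e] at this
    linarith
  -- inner product splits
  have splitS : ⟪V h, b - p⟫ = ⟪V h, h - p⟫ + ⟪V h, b - h⟫ := by
    simp only [inner_sub_right]; ring
  have splitV : ⟪V h, b - h⟫ = ⟪V h - V h1, b - h⟫ + ⟪V h1, b - h⟫ := by
    simp only [inner_sub_left]; ring
  have idI : ⟪a - h, h - b⟫ = -⟪a - h, b - h⟫ := by
    simp only [inner_sub_right]; ring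
  -- Young : -2γ ⟪V h - V h1, b - h⟫ ≤ γ²L² ‖h - h1‖² + ‖b - h‖²
  have young : -(2 * γ * ⟪V h - V h1, b - h⟫) ≤ γ ^ 2 * L ^ 2 * ‖h - h1‖ ^ 2 + ‖b - h‖ ^ 2 := by
    have cs : ⟪V h1 - V h, b - h⟫ ≤ ‖V h1 - V h‖ * ‖b - h‖ := real_inner_le_norm _ _
    have lb : ‖V h1 - V h‖ ≤ L * ‖h1 - h‖ := hlip _ _
    rw [norm_sub_rev h1 h] at lb
    have e : ⟪V h1 - V h, b - h⟫ = -⟪V h - V h1, b - h⟫ := by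
      simp only [inner_sub_left]; ring
    have bnd : ⟪V h1 - V h, b - h⟫ ≤ L * ‖h - h1‖ * ‖b - h‖ := by
      have := mul_le_mul_of_nonneg_right lb (norm_nonneg (b - h))
      linarith
    have hm := mul_le_mul_of_nonneg_left bnd (by positivity : (0:ℝ) ≤ 2 * γ)
    rw [e] at hm
    have hamgm : 2 * γ * (L * ‖h - h1‖ * ‖b - h‖)
        ≤ γ ^ 2 * L ^ 2 * ‖h - h1‖ ^ 2 + ‖b - h‖ ^ 2 := by
      nlinarith [sq_nonneg (γ * L * ‖h - h1‖ - ‖b - h‖)]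
    linarith [hm, hamgm]
  -- step1 : ‖b - p‖² ≤ ‖a - p‖² - 2γ⟪V h, h - p⟫ - ‖a - h‖² + γ²L²‖h - h1‖²
  have step1 : ‖b - p‖ ^ 2 ≤ ‖a - p‖ ^ 2 - 2 * γ * ⟪V h, h - p⟫ - ‖a - h‖ ^ 2
      + γ ^ 2 * L ^ 2 * ‖h - h1‖ ^ 2 := by
    have m1 : 2 * γ * ⟪V h, b - p⟫ ≤ 2 * ⟪a - b, b - p⟫ := by linarith [VI1]
    have m2 : 2 * γ * ⟪V h1, b - h⟫ ≥ 2 * ⟪a - h, b - h⟫ := by linarith [VI2]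
    have splitS2 : 2 * γ * ⟪V h, b - p⟫
        = 2 * γ * ⟪V h, h - p⟫ + 2 * γ * ⟪V h, b - h⟫ := by rw [splitS]; ring
    have splitV2 : 2 * γ * ⟪V h, b - h⟫
        = 2 * γ * ⟪V h - V h1, b - h⟫ + 2 * γ * ⟪V h1, b - h⟫ := by rw [splitV]; ring
    linarith [m1, m2, idA, idN, splitS2, splitV2, idI, young]
  -- bound on ‖h - h1‖²
  have F6 : ‖h - h1‖ ^ 2 ≤ 2 * ‖a - h‖ ^ 2 + 2 * ‖a - h1‖ ^ 2 := by
    have tri : ‖h - h1‖ ≤ ‖h - a‖ + ‖a - h1‖ := norm_sub_le_norm_sub_add_norm_sub _ _ _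
    have e : ‖h - a‖ = ‖a - h‖ := norm_sub_rev _ _
    rw [e] at tri
    have sq := mul_self_le_mul_self (norm_nonneg (h - h1)) tri
    nlinarith [sq, sq_nonneg (‖a - h‖ - ‖a - h1‖)]
  have hF : ‖a - h1‖ ^ 2 ≤ γ ^ 2 * L ^ 2 * ‖h1 - h2‖ ^ 2 := by
    have sq := mul_self_le_mul_self (norm_nonneg (a - h1)) F3
    nlinarith [sq]
  have hgl4 : 4 * (γ ^ 2 * L ^ 2) ≤ 1 := by
    have h2L : γ * (2 * L) ≤ 1 := by
      rw [le_div_iff₀ (by positivity)] at hγle; linarith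
    nlinarith [mul_pos hγ hL]
  -- final combination
  have hD : γ ^ 2 * L ^ 2 * ‖h - h1‖ ^ 2 ≤ 2 * (γ ^ 2 * L ^ 2) * ‖a - h‖ ^ 2
      + 2 * (γ ^ 2 * L ^ 2) * ‖a - h1‖ ^ 2 := by
    nlinarith [mul_le_mul_of_nonneg_left F6 (by positivity : (0:ℝ) ≤ γ ^ 2 * L ^ 2)]
  have key : 2 * (γ ^ 2 * L ^ 2) * ‖h - h1‖ ^ 2 ≤ ‖a - h‖ ^ 2
      + γ ^ 2 * L ^ 2 * ‖h1 - h2‖ ^ 2 := by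
    have p1 : 4 * (γ ^ 2 * L ^ 2) * ‖a - h‖ ^ 2 ≤ ‖a - h‖ ^ 2 := by
      have := mul_le_mul_of_nonneg_right hgl4 (sq_nonneg ‖a - h‖)
      linarith
    have p2 : 4 * (γ ^ 2 * L ^ 2) * (γ ^ 2 * L ^ 2 * ‖h1 - h2‖ ^ 2)
        ≤ γ ^ 2 * L ^ 2 * ‖h1 - h2‖ ^ 2 := by
      have := mul_le_mul_of_nonneg_right hgl4
        (by positivity : (0:ℝ) ≤ γ ^ 2 * L ^ 2 * ‖h1 - h2‖ ^ 2)
      linarith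
    have p3 : 4 * (γ ^ 2 * L ^ 2) * ‖a - h1‖ ^ 2
        ≤ 4 * (γ ^ 2 * L ^ 2) * (γ ^ 2 * L ^ 2 * ‖h1 - h2‖ ^ 2) := by
      exact mul_le_mul_of_nonneg_left hF (by positivity)
    linarith [hD, p1, p2, p3]
  linarith [step1, key]
end

section
/- Let F : ℝ^{d₁} × ℝ^{d₂} → ℝ be convex in its first argument and concave in its second. For points z_j = (u_j, v_j) and weights λ_j > 0, let z̄ = (ū, v̄) be the λ-weighted average of the z_j. Then for any (u, v): (Σ_j λ_j)⁻¹ Σ_j λ_j [⟨∇_u F(u_j, v_j), u_j - u⟩ - ⟨∇_v F(u_j, v_j), v_j - v⟩] ≥ F(ū, v) - F(u, v̄). -/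
/-!
At each point `(xᵢ, yᵢ)` the first-order inequalities for the convex function `F · yᵢ` and the
concave function `F xᵢ ·` give `F xᵢ q - F p yᵢ ≤ ⟪∇ₓF, xᵢ - p⟫ - ⟪∇_yF, yᵢ - q⟫`. Averaging with
the weights and applying Jensen's inequality in each variable bounds the gap at the averaged point.
-/

open scoped RealInnerProductSpace

open Finset

section FirstOrder

variable {E : Type*} [NormedAddCommGroup E] [NormedSpace ℝ E] {s : Set E} {f : E → ℝ}
  {f' : E →L[ℝ] ℝ} {x y : E}

theorem ConvexOn.add_fderiv_le (hf : ConvexOn ℝ s f) (hx : x ∈ s) (hy : y ∈ s)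
    (hf' : HasFDerivAt f f' x) : f x + f' (y - x) ≤ f y := by
  let ℓ : ℝ →ᵃ[ℝ] E := AffineMap.lineMap x y
  have hderiv : HasDerivAt (f ∘ ℓ) (f' (y - x)) 0 :=
    (by simpa [ℓ] using hf' : HasFDerivAt f f' (ℓ 0)).comp_hasDerivAt _
      AffineMap.hasDerivAt_lineMap
  have hslope := (hf.comp_affineMap ℓ).le_slope_of_hasDerivAt (by simpa [ℓ]) (by simpa [ℓ])
    one_pos hderiv
  simp only [slope_def_field, Function.comp_apply, ℓ, AffineMap.lineMap_apply_zero,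
    AffineMap.lineMap_apply_one, sub_zero, div_one] at hslope
  linarith

theorem ConcaveOn.le_add_fderiv (hf : ConcaveOn ℝ s f) (hx : x ∈ s) (hy : y ∈ s)
    (hf' : HasFDerivAt f f' x) : f y ≤ f x + f' (y - x) := by
  have := hf.neg.add_fderiv_le hx hy hf'.neg
  simp only [Pi.neg_apply, neg_apply] at this
  linarith

end FirstOrder

section Saddle

variable {E E' : Type*} [NormedAddCommGroup E] [InnerProductSpace ℝ E] [CompleteSpace E]
  [NormedAddCommGroup E'] [InnerProductSpace ℝ E'] [CompleteSpace E'] {F : E → E' → ℝ}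
  {gu : E → E' → E} {gv : E → E' → E'}

theorem saddle_sub_le_inner_gradient (hconv : ∀ y, ConvexOn ℝ Set.univ fun x => F x y)
    (hconc : ∀ x, ConcaveOn ℝ Set.univ fun y => F x y)
    (hgu : ∀ x y, HasGradientAt (fun x' => F x' y) (gu x y) x)
    (hgv : ∀ x y, HasGradientAt (fun y' => F x y') (gv x y) y) (x p : E) (y q : E') :
    F x q - F p y ≤ ⟪gu x y, x - p⟫ - ⟪gv x y, y - q⟫ := by
  have hp := (hconv y).add_fderiv_le trivial trivial (hgu x y).hasFDerivAt (y := p)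
  have hq := (hconc x).le_add_fderiv trivial trivial (hgv x y).hasFDerivAt (y := q)
  simp only [InnerProductSpace.toDual_apply_apply] at hp hq
  rw [← neg_sub x p, inner_neg_right] at hp
  rw [← neg_sub y q, inner_neg_right] at hq
  linarith

theorem saddle_sub_centerMass_le {ι : Type*} (hconv : ∀ y, ConvexOn ℝ Set.univ fun x => F x y)
    (hconc : ∀ x, ConcaveOn ℝ Set.univ fun y => F x y)
    (hgu : ∀ x y, HasGradientAt (fun x' => F x' y) (gu x y) x)
    (hgv : ∀ x y, HasGradientAt (fun y' => F x y') (gv x y) y) {t : Finset ι} {w : ι → ℝ}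
    (hw₀ : ∀ i ∈ t, 0 ≤ w i) (hw : 0 < ∑ i ∈ t, w i) (x : ι → E) (y : ι → E') (p : E) (q : E') :
    F (t.centerMass w x) q - F p (t.centerMass w y) ≤
      t.centerMass w fun i => ⟪gu (x i) (y i), x i - p⟫ - ⟪gv (x i) (y i), y i - q⟫ :=
  calc F (t.centerMass w x) q - F p (t.centerMass w y)
      ≤ t.centerMass w (fun i => F (x i) q) - t.centerMass w (fun i => F p (y i)) :=
        sub_le_sub ((hconv q).map_centerMass_le hw₀ hw fun _ _ => trivial)
          ((hconc p).le_map_centerMass hw₀ hw fun _ _ => trivial)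
    _ = t.centerMass w fun i => F (x i) q - F p (y i) := by
        simp only [centerMass, smul_sub, sum_sub_distrib]
    _ ≤ _ := smul_le_smul_of_nonneg_left (sum_le_sum fun i hi => smul_le_smul_of_nonneg_left
        (saddle_sub_le_inner_gradient hconv hconc hgu hgv _ _ _ _) (hw₀ i hi)) (by positivity)

end Saddle

/-- Convex-concave saddle functions: the weighted average of the first-order gap terms
bounds the Nikaido–Isoda-type gap of the weighted average point. -/
theorem saddle_average_bound {d₁ d₂ : ℕ}
    (F : EuclideanSpace ℝ (Fin d₁) → EuclideanSpace ℝ (Fin d₂) → ℝ)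
    (hconv : ∀ v, ConvexOn ℝ Set.univ fun u => F u v)
    (hconc : ∀ u, ConcaveOn ℝ Set.univ fun v => F u v)
    (gu : EuclideanSpace ℝ (Fin d₁) → EuclideanSpace ℝ (Fin d₂) → EuclideanSpace ℝ (Fin d₁))
    (gv : EuclideanSpace ℝ (Fin d₁) → EuclideanSpace ℝ (Fin d₂) → EuclideanSpace ℝ (Fin d₂))
    (hgu : ∀ u v, HasGradientAt (fun u' => F u' v) (gu u v) u)
    (hgv : ∀ u v, HasGradientAt (fun v' => F u v') (gv u v) v)
    (n : ℕ) (hn : 0 < n)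
    (u : ℕ → EuclideanSpace ℝ (Fin d₁)) (v : ℕ → EuclideanSpace ℝ (Fin d₂))
    (lam : ℕ → ℝ) (hlam : ∀ j, 0 < lam j) :
    ∀ (p : EuclideanSpace ℝ (Fin d₁)) (q : EuclideanSpace ℝ (Fin d₂)),
      F ((∑ j ∈ Finset.range n, lam j)⁻¹ • ∑ j ∈ Finset.range n, lam j • u j) q -
          F p ((∑ j ∈ Finset.range n, lam j)⁻¹ • ∑ j ∈ Finset.range n, lam j • v j) ≤
        (∑ j ∈ Finset.range n, lam j)⁻¹ *
          ∑ j ∈ Finset.range n,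
            lam j * (⟪gu (u j) (v j), u j - p⟫ - ⟪gv (u j) (v j), v j - q⟫) :=
  -- both sides are `Finset.centerMass` unfolded
  fun p q => saddle_sub_centerMass_le hconv hconc hgu hgv (fun j _ => (hlam j).le)
    (sum_pos (fun j _ => hlam j) (nonempty_range_iff.2 hn.ne')) u v p q
end

section
/- Let V : ℝ^d → ℝ^d be C¹-smooth in a neighborhood of a point x* ∈ X (X closed convex), and suppose the Jacobian DV(x*) satisfies wᵀ DV(x*) w > 0 for every nonzero w in the tangent cone of X at x*. Then there exist r > 0 and α > 0 such that ⟨V(x) - V(x*), x - x*⟩ ≥ α‖x - x*‖² for all x ∈ X with ‖x - x*‖ ≤ r. -/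
/-!
The tangent cone of `X` at `x*` is closed and invariant under scaling, so its unit vectors form a
compact set on which the quadratic form of `DV x*` has a positive minimum `m`. Hence
`⟪DV x* w, w⟫ ≥ m ‖w‖²` on the whole cone, and by continuity `⟪DV y w, w⟫ ≥ (m / 2) ‖w‖²` for `y`
near `x*`. For `x ∈ X` the direction `x - x*` lies in the cone by convexity, and integrating
`DV` along the segment from `x*` to `x` gives the claim.
-/

open scoped RealInnerProductSpace
open Metric Set

section TangentCone

variable {R E : Type*} [AddCommGroup E] [TopologicalSpace E] {s : Set E} {x : E}

theorem isClosed_tangentConeAt [SMul R E] : IsClosed (tangentConeAt R s x) := by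
  rw [tangentConeAt_def]
  exact isClosed_setOfPred_clusterPt

theorem smul_mem_tangentConeAt [Monoid R] [MulAction R E] [ContinuousConstSMul R E] {y : E}
    (hy : y ∈ tangentConeAt R s x) (a : R) : a • y ∈ tangentConeAt R s x := by
  obtain ⟨α, l, hl, c, d, hd₀, hds, hcd⟩ := exists_fun_of_mem_tangentConeAt hy
  exact mem_tangentConeAt_of_seq l (fun n => a * c n) d hd₀ hds
    (by simpa only [mul_smul] using hcd.const_smul a)

end TangentCone

section QuadraticForm

variable {E F : Type*} [NormedAddCommGroup E] [InnerProductSpace ℝ E]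

theorem inner_apply_self_sub_opNorm_mul_sq_le (A B : E →L[ℝ] E) (w : E) :
    ⟪A w, w⟫ - ‖B - A‖ * ‖w‖ ^ 2 ≤ ⟪B w, w⟫ := by
  have hdiff : -(‖B - A‖ * ‖w‖ ^ 2) ≤ ⟪(B - A) w, w⟫ :=
    calc -(‖B - A‖ * ‖w‖ ^ 2) ≤ -(‖(B - A) w‖ * ‖w‖) := by
          rw [sq, ← mul_assoc]; gcongr; exact (B - A).le_opNorm w
      _ ≤ ⟪(B - A) w, w⟫ := neg_le_of_abs_le (abs_real_inner_le_norm _ _)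
  rw [sub_apply, inner_sub_left] at hdiff
  linarith

theorem exists_pos_mul_sq_le_inner_of_isClosed_cone [ProperSpace E] {K : Set E}
    (hK : IsClosed K) (hsmul : ∀ w ∈ K, ∀ a : ℝ, 0 < a → a • w ∈ K) {A : E →L[ℝ] E}
    (hA : ∀ w ∈ K, w ≠ 0 → 0 < ⟪A w, w⟫) : ∃ m > 0, ∀ w ∈ K, m * ‖w‖ ^ 2 ≤ ⟪A w, w⟫ := by
  have hS : IsCompact (sphere (0 : E) 1 ∩ K) := (isCompact_sphere 0 1).inter_right hK
  have hcont : ContinuousOn (fun w => ⟪A w, w⟫) (sphere (0 : E) 1 ∩ K) := by fun_prop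
  obtain ⟨m, hm, hmin⟩ := hS.exists_forall_le' hcont fun w hw =>
    hA w hw.2 (ne_zero_of_mem_unit_sphere ⟨w, hw.1⟩)
  refine ⟨m, hm, fun w hw => ?_⟩
  rcases eq_or_ne w 0 with rfl | hw0
  · simp
  have hnorm : 0 < ‖w‖ := norm_pos_iff.2 hw0
  have hunit : ‖w‖⁻¹ • w ∈ sphere (0 : E) 1 ∩ K :=
    ⟨by simp [norm_smul, hnorm.ne'], hsmul w hw _ (inv_pos.2 hnorm)⟩
  have hscale : ⟪A (‖w‖⁻¹ • w), ‖w‖⁻¹ • w⟫ = ⟪A w, w⟫ / ‖w‖ ^ 2 := by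
    rw [map_smul, real_inner_smul_left, real_inner_smul_right]
    field_simp
  have := hmin _ hunit
  rw [hscale, le_div_iff₀ (by positivity)] at this
  exact this

theorem le_inner_sub_of_le_inner_fderiv_segment [NormedAddCommGroup F] [InnerProductSpace ℝ F]
    {V : E → F} {DV : E → E →L[ℝ] F} {a b : E} (v : F) {c : ℝ}
    (hV : ∀ y ∈ segment ℝ a b, HasFDerivAt V (DV y) y)
    (hc : ∀ y ∈ segment ℝ a b, c ≤ ⟪DV y (b - a), v⟫) : c ≤ ⟪V b - V a, v⟫ := by
  set f : ℝ → ℝ := fun t => ⟪V (a + t • (b - a)), v⟫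
  have hmem : ∀ t ∈ Icc (0 : ℝ) 1, a + t • (b - a) ∈ segment ℝ a b := fun t ht => by
    rw [segment_eq_image']
    exact mem_image_of_mem _ ht
  have hf : ∀ t ∈ Icc (0 : ℝ) 1, HasDerivAt f ⟪DV (a + t • (b - a)) (b - a), v⟫ t := by
    intro t ht
    have hline : HasDerivAt (fun s : ℝ => a + s • (b - a)) (b - a) t := by
      simpa using ((hasDerivAt_id t).smul_const (b - a)).const_add a
    simpa using ((hV _ (hmem t ht)).comp_hasDerivAt t hline).inner ℝ (hasDerivAt_const t v)
  have := (convex_Icc (0 : ℝ) 1).mul_sub_le_image_sub_of_le_deriv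
    (fun t ht => (hf t ht).continuousAt.continuousWithinAt)
    (fun t ht => (hf t (interior_subset ht)).differentiableAt.differentiableWithinAt)
    (fun t ht => (hf t (interior_subset ht)).deriv ▸ hc _ (hmem t (interior_subset ht)))
    0 (left_mem_Icc.2 zero_le_one) 1 (right_mem_Icc.2 zero_le_one) zero_le_one
  simpa [f, inner_sub_left] using this

end QuadraticForm

theorem regular_point_local_strong_general {d : ℕ}
    (V : EuclideanSpace ℝ (Fin d) → EuclideanSpace ℝ (Fin d))
    (X : Set (EuclideanSpace ℝ (Fin d))) (hcv : Convex ℝ X)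
    (xstar : EuclideanSpace ℝ (Fin d)) (hxs : xstar ∈ X)
    (DV : EuclideanSpace ℝ (Fin d) → EuclideanSpace ℝ (Fin d) →L[ℝ] EuclideanSpace ℝ (Fin d))
    (ε : ℝ) (hε : 0 < ε)
    (hdiff : ∀ y ∈ Metric.ball xstar ε, HasFDerivAt V (DV y) y)
    (hcont : ContinuousOn DV (Metric.ball xstar ε))
    (hpos : ∀ w ∈ tangentConeAt ℝ X xstar, w ≠ 0 → 0 < ⟪DV xstar w, w⟫) :
    ∃ r > 0, ∃ α > 0, ∀ x ∈ X, ‖x - xstar‖ ≤ r →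
      α * ‖x - xstar‖ ^ 2 ≤ ⟪V x - V xstar, x - xstar⟫ := by
  obtain ⟨m, hm, hcoer⟩ := exists_pos_mul_sq_le_inner_of_isClosed_cone isClosed_tangentConeAt
    (fun w hw a _ => smul_mem_tangentConeAt hw a) hpos
  obtain ⟨δ, hδ, hnear⟩ := Metric.continuousAt_iff.1
    (hcont.continuousAt (ball_mem_nhds xstar hε)) (m / 2) (half_pos hm)
  refine ⟨min δ ε / 2, by positivity, m / 2, half_pos hm, fun x hx hxr => ?_⟩
  have hseg : segment ℝ xstar x ⊆ ball xstar (min δ ε) :=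
    (convex_ball xstar _).segment_subset (mem_ball_self (by positivity))
      (mem_ball_iff_norm.2 (hxr.trans_lt (half_lt_self (by positivity))))
  have hdir : x - xstar ∈ tangentConeAt ℝ X xstar :=
    mem_tangentConeAt_of_segment_subset (hcv.segment_subset hxs hx)
  refine le_inner_sub_of_le_inner_fderiv_segment _
    (fun y hy => hdiff y (ball_subset_ball (min_le_right _ _) (hseg hy))) fun y hy => ?_
  have hclose : ‖DV y - DV xstar‖ < m / 2 := by
    rw [← dist_eq_norm]
    exact hnear ((mem_ball.1 (hseg hy)).trans_le (min_le_left _ _))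
  have := inner_apply_self_sub_opNorm_mul_sq_le (DV xstar) (DV y) (x - xstar)
  nlinarith [hcoer _ hdir, sq_nonneg ‖x - xstar‖]

/-- Near a point where the Jacobian is positive-definite along tangent directions,
the operator is strongly monotone along rays emanating from that point. -/
theorem regular_point_local_strong {d : ℕ}
    (V : EuclideanSpace ℝ (Fin d) → EuclideanSpace ℝ (Fin d))
    (X : Set (EuclideanSpace ℝ (Fin d))) (hcl : IsClosed X) (hcv : Convex ℝ X)
    (xstar : EuclideanSpace ℝ (Fin d)) (hxs : xstar ∈ X)
    (DV : EuclideanSpace ℝ (Fin d) → EuclideanSpace ℝ (Fin d) →L[ℝ] EuclideanSpace ℝ (Fin d))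
    (ε : ℝ) (hε : 0 < ε)
    (hdiff : ∀ y ∈ Metric.ball xstar ε, HasFDerivAt V (DV y) y)
    (hcont : ContinuousOn DV (Metric.ball xstar ε))
    (hpos : ∀ w ∈ tangentConeAt ℝ X xstar, w ≠ 0 → 0 < ⟪DV xstar w, w⟫) :
    ∃ r > 0, ∃ α > 0, ∀ x ∈ X, ‖x - xstar‖ ≤ r →
      α * ‖x - xstar‖ ^ 2 ≤ ⟪V x - V xstar, x - xstar⟫ :=
  regular_point_local_strong_general V X hcv xstar hxs DV ε hε hdiff hcont hpos
end

section
/- Let x* be a solution of the VI on closed convex X, and suppose for all j ∈ {1,…,N} the iterates of stochastic Past Extra-Gradient satisfy x_{j+1/2} ∈ X ∩ B_r(x*) and hence ⟨V(x_{j+1/2}), x_{j+1/2} - x*⟩ ≥ 0. Then ‖x_{N+1} - x*‖² ≤ ‖x₁ - x*‖² - S_N + Q_N, where S_N = Σ_{j=1}^N 2γ_j⟨ξ_{j+1/2}, x_{j+1/2} - x*⟩ and Q_N = Σ_{j=1}^N 2γ_j²(‖Ṽ_{j+1/2}‖² + ‖Ṽ_{j-1/2}‖²). -/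
open scoped RealInnerProductSpace

-- auxiliary lemmas
lemma proj_vi {d : ℕ} {X : Set (EuclideanSpace ℝ (Fin d))} (hcv : Convex ℝ X)
    {z p : EuclideanSpace ℝ (Fin d)} (h : IsProjOn X z p) :
    ∀ q ∈ X, ⟪z - p, q - p⟫ ≤ 0 := by
  intro q hq
  by_contra hcon
  push_neg at hcon
  have hqp : q - p ≠ 0 := by
    intro h0; rw [h0, inner_zero_right] at hcon; exact lt_irrefl 0 hcon
  have hn : 0 < ‖q - p‖ ^ 2 := by
    have := norm_pos_iff.mpr hqp; positivity
  set c := ⟪z - p, q - p⟫ with hcdef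
  set t := min 1 (c / ‖q - p‖ ^ 2) with htdef
  have ht0 : 0 < t := lt_min one_pos (div_pos hcon hn)
  have ht1 : t ≤ 1 := min_le_left _ _
  have hw : p + t • (q - p) ∈ X := by
    have hmem := hcv h.1 hq (by linarith : (0:ℝ) ≤ 1 - t) ht0.le (by ring)
    have : (1 - t) • p + t • q = p + t • (q - p) := by
      module
    rwa [this] at hmem
  have hle := h.2 _ hw
  have hexp : ‖z - (p + t • (q - p))‖ ^ 2
      = ‖z - p‖ ^ 2 - 2 * (t * c) + t ^ 2 * ‖q - p‖ ^ 2 := by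
    have h2 := norm_sub_sq_real (z - p) (t • (q - p))
    rw [show z - p - t • (q - p) = z - (p + t • (q - p)) by abel] at h2
    rw [h2, real_inner_smul_right, norm_smul, mul_pow, Real.norm_eq_abs, sq_abs]
  have hsq : ‖z - p‖ ^ 2 ≤ ‖z - (p + t • (q - p))‖ ^ 2 :=
    pow_le_pow_left₀ (norm_nonneg _) hle 2
  have h3 : 2 * (t * c) ≤ t ^ 2 * ‖q - p‖ ^ 2 := by
    rw [hexp] at hsq; linarith
  have key : 2 * c ≤ t * ‖q - p‖ ^ 2 := by nlinarith [ht0, h3]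
  have htc : t ≤ c / ‖q - p‖ ^ 2 := min_le_right _ _
  have hfin : t * ‖q - p‖ ^ 2 ≤ c := by
    have := mul_le_mul_of_nonneg_right htc hn.le
    rwa [div_mul_cancel₀ c hn.ne'] at this
  linarith

lemma step_bound {d : ℕ} {X : Set (EuclideanSpace ℝ (Fin d))} (hcv : Convex ℝ X)
    {u : EuclideanSpace ℝ (Fin d)} (huX : u ∈ X)
    {γ : ℝ} (hγ : 0 ≤ γ) {xj xh xn Wp Wc ξ Vh : EuclideanSpace ℝ (Fin d)}
    (hW : Wc = Vh + ξ)
    (h1 : IsProjOn X (xj - γ • Wp) xh) (h2 : IsProjOn X (xj - γ • Wc) xn)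
    (hpos : 0 ≤ ⟪Vh, xh - u⟫) :
    ‖xn - u‖ ^ 2 ≤ ‖xj - u‖ ^ 2 - 2 * γ * ⟪ξ, xh - u⟫
      + 2 * γ ^ 2 * (‖Wc‖ ^ 2 + ‖Wp‖ ^ 2) := by
  have A := proj_vi hcv h2 u huX
  have B := proj_vi hcv h1 xn h2.1
  have hA : (xj - γ • Wc) - xn = (xj - xn) - γ • Wc := by abel
  have hB : (xj - γ • Wp) - xh = (xj - xh) - γ • Wp := by abel
  rw [hA, inner_sub_left, real_inner_smul_left] at A
  rw [hB, inner_sub_left, real_inner_smul_left] at B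
  -- F1 : ⟪xj - xn, u - xn⟫ ≤ γ * ⟪Wc, u - xn⟫  (from A)
  -- F2 : ⟪xj - xh, xn - xh⟫ ≤ γ * ⟪Wp, xn - xh⟫  (from B)
  have I1 : ‖xj - u‖ ^ 2
      = ‖xj - xn‖ ^ 2 + 2 * ⟪xj - xn, xn - u⟫ + ‖xn - u‖ ^ 2 := by
    have h := norm_add_sq_real (xj - xn) (xn - u)
    rw [show (xj - xn) + (xn - u) = xj - u by abel] at h
    linarith
  have I2 : ‖xj - xn‖ ^ 2
      = ‖xj - xh‖ ^ 2 - 2 * ⟪xj - xh, xn - xh⟫ + ‖xn - xh‖ ^ 2 := by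
    have h := norm_sub_sq_real (xj - xh) (xn - xh)
    rw [show (xj - xh) - (xn - xh) = xj - xn by abel] at h
    linarith
  have I3 : ⟪xj - xn, u - xn⟫ = -⟪xj - xn, xn - u⟫ := by
    rw [show u - xn = -(xn - u) by abel, inner_neg_right]
  have G1 : γ * ⟪Wc, u - xn⟫
      = -(γ * ⟪Vh, xh - u⟫) - γ * ⟪ξ, xh - u⟫
        - γ * ⟪Wp, xn - xh⟫ - γ * ⟪Wc - Wp, xn - xh⟫ := by
    have e1 : ⟪Wc, u - xn⟫ = -⟪Wc, xh - u⟫ - ⟪Wc, xn - xh⟫ := by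
      rw [show u - xn = -(xh - u) + -(xn - xh) by abel, inner_add_right,
        inner_neg_right, inner_neg_right]
      ring
    have e2 : ⟪Wc, xn - xh⟫ = ⟪Wp, xn - xh⟫ + ⟪Wc - Wp, xn - xh⟫ := by
      rw [inner_sub_left]; ring
    have e3 : ⟪Wc, xh - u⟫ = ⟪Vh, xh - u⟫ + ⟪ξ, xh - u⟫ := by
      rw [hW, inner_add_left]
    rw [e1, e2, e3]; ring
  have F3 : 0 ≤ γ ^ 2 * ‖Wc - Wp‖ ^ 2 + 2 * (γ * ⟪Wc - Wp, xn - xh⟫)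
      + ‖xn - xh‖ ^ 2 := by
    have h := norm_add_sq_real (γ • (Wc - Wp)) (xn - xh)
    rw [real_inner_smul_left, norm_smul] at h
    have hs : (‖γ‖ * ‖Wc - Wp‖) ^ 2 = γ ^ 2 * ‖Wc - Wp‖ ^ 2 := by
      rw [mul_pow, Real.norm_eq_abs, sq_abs]
    rw [hs] at h
    calc (0:ℝ) ≤ ‖γ • (Wc - Wp) + (xn - xh)‖ ^ 2 := by positivity
      _ = _ := h
  have F4 : γ ^ 2 * ‖Wc - Wp‖ ^ 2 ≤ γ ^ 2 * (2 * (‖Wc‖ ^ 2 + ‖Wp‖ ^ 2)) := by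
    refine mul_le_mul_of_nonneg_left ?_ (sq_nonneg γ)
    have h := norm_sub_le Wc Wp
    nlinarith [norm_nonneg (Wc - Wp), norm_nonneg Wc, norm_nonneg Wp,
      sq_nonneg (‖Wc‖ - ‖Wp‖)]
  have hposγ : 0 ≤ γ * ⟪Vh, xh - u⟫ := mul_nonneg hγ hpos
  have pn : 0 ≤ ‖xj - xh‖ ^ 2 := by positivity
  linarith [A, B, I1, I2, I3, G1, F3, F4, hposγ, pn]

/-- Pathwise bound for stochastic Past Extra-Gradient while iterates stay in a
neighborhood of the solution:
`‖x_{N+1} - x*‖² ≤ ‖x₁ - x*‖² - S_N + Q_N`.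
Here `xh j` is the leading state `x_{j+1/2}`, `ξ j` the noise `ξ_{j+1/2}`, and
`W j = V(xh j) + ξ j` the noisy oracle `Ṽ_{j+1/2}`. -/
theorem stochastic_peg_pathwise_bound {d : ℕ}
    (V : EuclideanSpace ℝ (Fin d) → EuclideanSpace ℝ (Fin d))
    (X : Set (EuclideanSpace ℝ (Fin d)))
    (hne : X.Nonempty) (hcl : IsClosed X) (hcv : Convex ℝ X)
    (xstar : EuclideanSpace ℝ (Fin d)) (hxs : xstar ∈ X)
    (hsol : ∀ z ∈ X, 0 ≤ ⟪V xstar, z - xstar⟫)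
    (r : ℝ) (hr : 0 < r)
    (γ : ℕ → ℝ) (hγ : ∀ j, 0 ≤ γ j)
    (x xh ξ W : ℕ → EuclideanSpace ℝ (Fin d))
    (hW : ∀ j, W j = V (xh j) + ξ j)
    (N : ℕ)
    (hup1 : ∀ j ∈ Finset.Icc 1 N, IsProjOn X (x j - γ j • W (j - 1)) (xh j))
    (hup2 : ∀ j ∈ Finset.Icc 1 N, IsProjOn X (x j - γ j • W j) (x (j + 1)))
    (hin : ∀ j ∈ Finset.Icc 1 N, xh j ∈ X ∩ Metric.closedBall xstar r)
    (hpos : ∀ j ∈ Finset.Icc 1 N, 0 ≤ ⟪V (xh j), xh j - xstar⟫) :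
    ‖x (N + 1) - xstar‖ ^ 2 ≤
      ‖x 1 - xstar‖ ^ 2 -
        (∑ j ∈ Finset.Icc 1 N, 2 * γ j * ⟪ξ j, xh j - xstar⟫) +
        ∑ j ∈ Finset.Icc 1 N, 2 * γ j ^ 2 * (‖W j‖ ^ 2 + ‖W (j - 1)‖ ^ 2) := by

  revert hup1 hup2 hin hpos
  induction N with
  | zero => intro _ _ _ _; simp
  | succ n ih =>
    intro hup1 hup2 hin hpos
    have hsub : Finset.Icc 1 n ⊆ Finset.Icc 1 (n + 1) :=
      Finset.Icc_subset_Icc_right (Nat.le_succ n)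
    have IH := ih (fun j hj => hup1 j (hsub hj)) (fun j hj => hup2 j (hsub hj))
      (fun j hj => hin j (hsub hj)) (fun j hj => hpos j (hsub hj))
    have hmem : n + 1 ∈ Finset.Icc 1 (n + 1) :=
      Finset.mem_Icc.mpr ⟨Nat.le_add_left 1 n, le_rfl⟩
    have step := step_bound hcv hxs (hγ (n + 1)) (hW (n + 1))
      (hup1 (n + 1) hmem) (hup2 (n + 1) hmem) (hpos (n + 1) hmem)
    rw [Finset.sum_Icc_succ_top (Nat.le_add_left 1 n),
      Finset.sum_Icc_succ_top (Nat.le_add_left 1 n)]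
    linarith [IH, step]
end
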